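/- Let u, k, ω be real numbers, v ≥ 0, let Z have the Gaussian law on ℝ with mean 0 and variance v, and let φ be independent of Z and uniformly distributed on [0, 2π). Then for all real x, t, s, E[(−u k sin(kx + kZ − ωt + φ)) · (u cos(kx − ωs + φ))] = ½ u² k sin(ω(t − s)) exp(−k²v/2). -/

import Mathlib

/-!
Integrate out the phase first (Fubini). Over a full period the product
`sin (A + φ) * cos (B + φ) = (sin (A - B) + sin (A + B + 2φ)) / 2` averages to `sin (A - B) / 2`,
which leaves the Gaussian average of `sin (k Z + c)`. That is the imaginary part of
`e^{ic}` times the characteristic function of `Z` at `k`, namely `sin c · exp (-k²v/2)`.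
-/

open MeasureTheory ProbabilityTheory Real
open scoped NNReal

noncomputable def uniformPhase : Measure ℝ :=
  (ENNReal.ofReal (2 * π))⁻¹ • volume.restrict (Set.Ico 0 (2 * π))

instance isProbabilityMeasure_uniformPhase : IsProbabilityMeasure uniformPhase := by
  constructor
  rw [uniformPhase, Measure.smul_apply, Measure.restrict_apply_univ, Real.volume_Ico, sub_zero,
    smul_eq_mul, ENNReal.inv_mul_cancel (by simp [pi_pos]) ENNReal.ofReal_ne_top]

lemma integral_uniformPhase (f : ℝ → ℝ) :
    ∫ φ, f φ ∂uniformPhase = (2 * π)⁻¹ * ∫ φ in (0)..(2 * π), f φ := by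
  rw [uniformPhase, integral_smul_measure, ENNReal.toReal_inv, ENNReal.toReal_ofReal two_pi_pos.le,
    setIntegral_congr_set Ico_ae_eq_Ioc, ← intervalIntegral.integral_of_le two_pi_pos.le,
    smul_eq_mul]

lemma integral_sin_two_mul_add_eq_zero (c : ℝ) :
    ∫ φ in (0)..(2 * π), sin (2 * φ + c) = 0 := by
  rw [intervalIntegral.integral_comp_mul_add (f := sin) two_ne_zero, integral_sin,
    show 2 * (2 * π) + c = c + (2 : ℕ) * (2 * π) by push_cast; ring, cos_add_nat_mul_two_pi]
  simp

lemma integral_sin_add_mul_cos_add (a b : ℝ) :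
    ∫ φ in (0)..(2 * π), sin (a + φ) * cos (b + φ) = π * sin (a - b) := by
  have product_to_sum : ∀ φ,
      sin (a + φ) * cos (b + φ) = sin (a - b) / 2 + sin (2 * φ + (a + b)) / 2 := by
    intro φ
    rw [show a - b = (a + φ) - (b + φ) by ring,
      show 2 * φ + (a + b) = (a + φ) + (b + φ) by ring, sin_sub (a + φ), sin_add (a + φ)]
    ring
  simp_rw [product_to_sum]
  rw [intervalIntegral.integral_add (by simp) (by apply Continuous.intervalIntegrable; fun_prop),
    intervalIntegral.integral_div, intervalIntegral.integral_div, integral_sin_two_mul_add_eq_zero,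
    intervalIntegral.integral_const, smul_eq_mul]
  ring

lemma integral_sin_add_mul_cos_add_uniformPhase (a b : ℝ) :
    ∫ φ, sin (a + φ) * cos (b + φ) ∂uniformPhase = sin (a - b) / 2 := by
  rw [integral_uniformPhase, integral_sin_add_mul_cos_add]
  field_simp

lemma integral_sin_mul_add_gaussianReal (m : ℝ) (v : ℝ≥0) (k c : ℝ) :
    ∫ z, sin (k * z + c) ∂gaussianReal m v = sin (k * m + c) * exp (-(k ^ 2 * v) / 2) := by
  have hexp : ∀ z : ℝ,
      sin (k * z + c) = (Complex.exp (c * Complex.I) * Complex.exp (k * z * Complex.I)).im := by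
    intro z
    rw [← Complex.exp_add, ← Complex.exp_ofReal_mul_I_im (k * z + c)]
    push_cast
    ring_nf
  have hint : Integrable
      (fun z : ℝ ↦ Complex.exp (c * Complex.I) * Complex.exp (k * z * Complex.I))
      (gaussianReal m v) := by
    refine .of_bound (by fun_prop) 1 (ae_of_all _ fun z ↦ ?_)
    rw [norm_mul, ← Complex.ofReal_mul, Complex.norm_exp_ofReal_mul_I,
      Complex.norm_exp_ofReal_mul_I, one_mul]
  have hphase : Complex.exp (c * Complex.I) * Complex.exp (k * m * Complex.I - v * k ^ 2 / 2)
      = ↑(exp (-(k ^ 2 * v) / 2)) * Complex.exp (↑(k * m + c) * Complex.I) := by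
    rw [Complex.ofReal_exp, ← Complex.exp_add, ← Complex.exp_add]
    push_cast
    ring_nf
  rw [integral_congr_ae (.of_forall hexp), ← RCLike.im_eq_complex_im, integral_im hint,
    integral_const_mul, ← charFun_apply_real, charFun_gaussianReal, RCLike.im_eq_complex_im,
    hphase, Complex.im_ofReal_mul, Complex.exp_ofReal_mul_I_im, mul_comm]

theorem expectation_fprime_f (u k ω : ℝ) (v : ℝ≥0) (x t s : ℝ) :
    ∫ p : ℝ × ℝ,
        (-(u * k) * Real.sin (k * x + k * p.1 - ω * t + p.2)) *
          (u * Real.cos (k * x - ω * s + p.2))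
        ∂((gaussianReal 0 v).prod
            ((ENNReal.ofReal (2 * π))⁻¹ • volume.restrict (Set.Ico 0 (2 * π))))
      = (1 / 2) * u ^ 2 * k * Real.sin (ω * (t - s)) * Real.exp (-(k ^ 2 * (v : ℝ)) / 2) := by
  rw [← uniformPhase]
  have hint : Integrable (fun p : ℝ × ℝ ↦ (-(u * k) * sin (k * x + k * p.1 - ω * t + p.2)) *
      (u * cos (k * x - ω * s + p.2))) ((gaussianReal 0 v).prod uniformPhase) := by
    refine .of_bound (by fun_prop) (‖u * k‖ * ‖u‖) (ae_of_all _ fun p ↦ ?_)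
    rw [norm_mul, norm_mul, norm_mul, norm_neg]
    exact mul_le_mul (mul_le_of_le_one_right (norm_nonneg _) (abs_sin_le_one _))
      (mul_le_of_le_one_right (norm_nonneg _) (abs_cos_le_one _)) (by positivity) (by positivity)
  have harg : ∀ z : ℝ, k * x + k * z - ω * t - (k * x - ω * s) = k * z + (ω * s - ω * t) :=
    fun z ↦ by ring
  simp_rw [integral_prod _ hint, mul_mul_mul_comm (-(u * k)), integral_const_mul,
    integral_sin_add_mul_cos_add_uniformPhase, harg]
  rw [integral_div, integral_sin_mul_add_gaussianReal, mul_zero, zero_add,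
    show ω * s - ω * t = -(ω * (t - s)) by ring, sin_neg]
  ring
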